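/- arXiv:1407.8086 — 2 statements merged into one kernel-verified Lean document; each statement's English description precedes it below -/
import Mathlib

section
/- gcd(f_n(s,t), f_m(s,t)) = f_{gcd(n,m)}(s,t) as polynomials in Z[s,t], for all positive integers m, n. -/
/-!
Over a commutative ring the sequence `f_0 = 0`, `f_1 = 1`, `f_{n+2} = s f_{n+1} + t f_n` satisfies
the addition law `f_{m+n+1} = f_{m+1} f_{n+1} + t f_m f_n`. When `s` and `t` are coprime in a ring
where divisors of products split (a UFD such as `ℤ[s,t]`), each `f_{n+1}` is coprime to `t` (it is
`≡ s^n` mod `t`) and to `f_n`. So if `d ∣ f_{m+1}`, the addition law gives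
`d ∣ f_{m+1+n} ↔ d ∣ t f_m f_n ↔ d ∣ f_n`, and the Euclidean algorithm on the indices yields
`d ∣ f_{gcd(m,n)} ↔ d ∣ f_m ∧ d ∣ f_n`.
-/

open MvPolynomial

/-- Generalized Fibonacci polynomials in ℤ[s,t]: X 0 plays the role of s, X 1 of t. -/
noncomputable def fibPoly : ℕ → MvPolynomial (Fin 2) ℤ
  | 0 => 0
  | 1 => 1
  | n + 2 => X 0 * fibPoly (n + 1) + X 1 * fibPoly n

def genFib {R : Type*} [CommSemiring R] (s t : R) : ℕ → R
  | 0 => 0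
  | 1 => 1
  | n + 2 => s * genFib s t (n + 1) + t * genFib s t n

section CommSemiring

variable {R : Type*} [CommSemiring R] (s t : R)

@[simp] theorem genFib_zero : genFib s t 0 = 0 := rfl

@[simp] theorem genFib_one : genFib s t 1 = 1 := rfl

theorem genFib_add_two (n : ℕ) :
    genFib s t (n + 2) = s * genFib s t (n + 1) + t * genFib s t n := rfl

theorem genFib_add (m n : ℕ) :
    genFib s t (m + n + 1) =
      genFib s t (m + 1) * genFib s t (n + 1) + t * genFib s t m * genFib s t n := by
  induction n generalizing m with
  | zero => simp
  | succ n ih =>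
    rw [show m + (n + 1) + 1 = m + 1 + n + 1 by omega, ih, genFib_add_two, genFib_add_two]
    ring

end CommSemiring

section DecompositionMonoid

variable {R : Type*} [CommRing R] [DecompositionMonoid R] {s t : R}

theorem isRelPrime_genFib_succ (hst : IsRelPrime s t) (n : ℕ) :
    IsRelPrime (genFib s t (n + 1)) t := by
  induction n with
  | zero => exact isRelPrime_one_left
  | succ n ih => simpa [genFib_add_two, mul_comm t] using hst.mul_left ih

theorem isRelPrime_genFib_succ_genFib (hst : IsRelPrime s t) (n : ℕ) :
    IsRelPrime (genFib s t (n + 1)) (genFib s t n) := by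
  induction n with
  | zero => exact isRelPrime_one_left
  | succ n ih =>
    rw [genFib_add_two, IsRelPrime.mul_add_right_left_iff]
    exact (isRelPrime_genFib_succ hst n).symm.mul_left ih.symm

theorem dvd_genFib_add_iff (hst : IsRelPrime s t) {d : R} {m : ℕ} (hd : d ∣ genFib s t m)
    (n : ℕ) : d ∣ genFib s t (m + n) ↔ d ∣ genFib s t n := by
  obtain _ | m := m
  · simp
  have hrel : IsRelPrime d (t * genFib s t m) :=
    ((isRelPrime_genFib_succ hst m).mul_right (isRelPrime_genFib_succ_genFib hst m)).of_dvd_left hd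
  calc d ∣ genFib s t (m + 1 + n) ↔ d ∣ t * genFib s t m * genFib s t n := by
        rw [show m + 1 + n = m + n + 1 by omega, genFib_add, dvd_add_right (hd.mul_right _)]
    _ ↔ d ∣ genFib s t n := ⟨hrel.dvd_of_dvd_mul_left, fun h => h.mul_left _⟩

theorem dvd_genFib_add_mul_iff (hst : IsRelPrime s t) {d : R} {m : ℕ} (hd : d ∣ genFib s t m)
    (n k : ℕ) : d ∣ genFib s t (n + m * k) ↔ d ∣ genFib s t n := by
  induction k with
  | zero => simp
  | succ k ih =>
    rw [show n + m * (k + 1) = m + (n + m * k) by ring, dvd_genFib_add_iff hst hd, ih]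

theorem dvd_genFib_gcd_iff (hst : IsRelPrime s t) (d : R) (m n : ℕ) :
    d ∣ genFib s t (m.gcd n) ↔ d ∣ genFib s t m ∧ d ∣ genFib s t n := by
  induction m, n using Nat.gcd.induction with
  | H0 n => simp
  | H1 m n _ ih =>
    rw [Nat.gcd_rec, ih, and_comm, and_congr_right_iff]
    intro hd
    rw [← dvd_genFib_add_mul_iff hst hd (n % m) (n / m), Nat.mod_add_div]

end DecompositionMonoid

theorem MvPolynomial.isRelPrime_X_X {σ R : Type*} [CommRing R] [IsDomain R] {i j : σ}
    (hij : i ≠ j) : IsRelPrime (X i : MvPolynomial σ R) (X j) :=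
  X_prime.irreducible.isRelPrime_iff_not_dvd.2 (X_dvd_X.not.2 hij)

theorem fibPoly_eq_genFib : fibPoly = genFib (X 0) (X 1) := by
  funext n
  induction n using fibPoly.induct with
  | case1 | case2 => rfl
  | case3 n ih₁ ih₀ => rw [fibPoly, genFib_add_two, ih₀, ih₁]

theorem fibPoly_gcd_general (m n : ℕ) :
    fibPoly (Nat.gcd n m) ∣ fibPoly n ∧ fibPoly (Nat.gcd n m) ∣ fibPoly m ∧
      ∀ d : MvPolynomial (Fin 2) ℤ, d ∣ fibPoly n → d ∣ fibPoly m →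
        d ∣ fibPoly (Nat.gcd n m) := by
  have hst : IsRelPrime (X 0 : MvPolynomial (Fin 2) ℤ) (X 1) := isRelPrime_X_X zero_ne_one
  have key := fun d => dvd_genFib_gcd_iff hst d n m
  rw [fibPoly_eq_genFib]
  exact ⟨((key _).1 dvd_rfl).1, ((key _).1 dvd_rfl).2, fun d hn hm => (key d).2 ⟨hn, hm⟩⟩

/-- gcd(f_n, f_m) = f_{gcd(n,m)} in ℤ[s,t]: f_{gcd(n,m)} is a greatest common divisor. -/
theorem fibPoly_gcd (m n : ℕ) (hm : 0 < m) (hn : 0 < n) :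
    fibPoly (Nat.gcd n m) ∣ fibPoly n ∧ fibPoly (Nat.gcd n m) ∣ fibPoly m ∧
      ∀ d : MvPolynomial (Fin 2) ℤ, d ∣ fibPoly n → d ∣ fibPoly m →
        d ∣ fibPoly (Nat.gcd n m) :=
  fibPoly_gcd_general m n
end

section
/- For n ≥ 2 and m ≥ 1, f_n(s,t) divides f_m(s,t) in Z[s,t] if and only if n divides m. -/
open MvPolynomial

lemma fibPoly_add (a b : ℕ) :
    fibPoly (a + b + 1) =
      fibPoly (a + 1) * fibPoly (b + 1) + X 1 * fibPoly a * fibPoly b := by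
  induction b using Nat.twoStepInduction generalizing a with
  | zero => simp [fibPoly]
  | one => show fibPoly (a + 2) = _; simp [fibPoly]; ring
  | more b ih1 ih2 =>
    have h1 : a + (b + 2) + 1 = (a + b + 1) + 2 := by ring
    rw [h1,
      show fibPoly ((a+b+1)+2) = X 0 * fibPoly (a+b+1+1) + X 1 * fibPoly (a+b+1) from rfl,
      show a+b+1+1 = a+(b+1)+1 from by ring, ih2 a, ih1 a,
      show fibPoly (b+2+1) = X 0 * fibPoly (b+2) + X 1 * fibPoly (b+1) from rfl,
      show fibPoly (b+1+1) = X 0 * fibPoly (b+1) + X 1 * fibPoly b from rfl]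
    ring

lemma fibPoly_dvd_of_dvd {n m : ℕ} (hn : 1 ≤ n) (h : n ∣ m) :
    fibPoly n ∣ fibPoly m := by
  obtain ⟨q, rfl⟩ := h
  induction q with
  | zero => simp [fibPoly]
  | succ q ih =>
    have hrw : n * (q + 1) = n * q + (n - 1) + 1 := by rw [Nat.mul_succ]; omega
    rw [hrw, fibPoly_add]
    have : n * q + 1 = n * q + 1 := rfl
    have hn1 : n - 1 + 1 = n := by omega
    rw [hn1]
    exact dvd_add (dvd_mul_left _ _) ((ih.mul_left (X 1)).mul_right _)

lemma eval_one_fibPoly (k : ℕ) :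
    MvPolynomial.eval (fun _ => (1 : ℤ)) (fibPoly k) = Nat.fib k := by
  induction k using Nat.twoStepInduction with
  | zero => simp [fibPoly]
  | one => simp [fibPoly]
  | more k ih1 ih2 =>
    simp [fibPoly, ih1, ih2, Nat.fib_add_two]
    push_cast
    ring

lemma eval_zero_one_fibPoly (k : ℕ) :
    MvPolynomial.eval (![0, 1] : Fin 2 → ℤ) (fibPoly k) = (k % 2 : ℕ) := by
  induction k using Nat.twoStepInduction with
  | zero => simp [fibPoly]
  | one => simp [fibPoly]
  | more k ih1 ih2 =>
    have h : (k + 2) % 2 = k % 2 := by omega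
    rw [h, ← ih1]
    simp [fibPoly]

lemma fib_dvd_iff {n m : ℕ} (hn : 3 ≤ n) (hm : 1 ≤ m) (h : Nat.fib n ∣ Nat.fib m) :
    n ∣ m := by
  have hg : Nat.fib (Nat.gcd n m) = Nat.fib n := by
    rw [Nat.fib_gcd, Nat.gcd_eq_left h]
  have h2 : 2 ≤ Nat.fib n := by
    calc 2 = Nat.fib 3 := rfl
    _ ≤ Nat.fib n := Nat.fib_mono hn
  have hg2 : 2 ≤ Nat.gcd n m := by
    by_contra hc
    interval_cases hgc : Nat.gcd n m <;> simp_all <;> omega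
  have := Nat.fib_strictMonoOn.injOn (Set.mem_Ici.2 hg2)
    (Set.mem_Ici.2 (by omega : 2 ≤ n)) hg
  rw [← this]
  exact Nat.gcd_dvd_right n m

/-- For n ≥ 2 and m ≥ 1, f_n ∣ f_m in ℤ[s,t] iff n ∣ m. -/
theorem fibPoly_dvd_iff (n m : ℕ) (hn : 2 ≤ n) (hm : 1 ≤ m) :
    fibPoly n ∣ fibPoly m ↔ n ∣ m := by
  constructor
  · intro h
    rcases eq_or_lt_of_le hn with h2 | h3
    · -- n = 2
      subst h2
      have := map_dvd (MvPolynomial.eval (![0, 1] : Fin 2 → ℤ)) h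
      rw [eval_zero_one_fibPoly, eval_zero_one_fibPoly] at this
      norm_num at this
      omega
    · -- n ≥ 3
      have := map_dvd (MvPolynomial.eval (fun _ => (1 : ℤ))) h
      rw [eval_one_fibPoly, eval_one_fibPoly] at this
      exact fib_dvd_iff h3 hm (Int.natCast_dvd_natCast.mp this)
  · exact fibPoly_dvd_of_dvd (by omega)
end
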